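/- arXiv:1501.02165 — 2 statements merged into one kernel-verified Lean document; each statement's English description precedes it below -/
import Mathlib

section
/- Every update consistent distributed history is eventually consistent. -/
/-- An update-query abstract data type. -/
structure UQADT (U Qi Qo S : Type*) where
  s0 : S
  T : S → U → S
  G : S → Qi → Qo

/-- A distributed history: events labelled by updates or queries, with a program order. -/
structure Hist (U Qi Qo E : Type*) where
  lab : E → U ⊕ (Qi × Qo)
  po : E → E → Prop

variable {U Qi Qo S E : Type*}

def Hist.upd (h : Hist U Qi Qo E) : Set E := {e | ∃ u, h.lab e = Sum.inl u}
def Hist.qry (h : Hist U Qi Qo E) : Set E := {e | ∃ q, h.lab e = Sum.inr q}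

/-- `w` is an enumeration (an initial segment of `ℕ`, possibly finite) of the
set `F` of events, compatible with the relation `r`. -/
def IsLinz (r : E → E → Prop) (F : Set E) (w : ℕ → Option E) : Prop :=
  (∀ i j a, w i = some a → w j = some a → i = j) ∧
  (∀ a ∈ F, ∃ i, w i = some a) ∧
  (∀ i a, w i = some a → a ∈ F) ∧
  (∀ i j a b, i < j → w i = some a → w j = some b → ¬ r b a) ∧
  (∀ i j, i ≤ j → w j ≠ none → w i ≠ none)

/-- The sequential word read off along `w` is recognized by `O`. -/
def Recog (O : UQADT U Qi Qo S) (h : Hist U Qi Qo E) (w : ℕ → Option E) : Prop :=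
  ∃ st : ℕ → S, st 0 = O.s0 ∧ ∀ i,
    match w i with
    | none => st (i+1) = st i
    | some e =>
      match h.lab e with
      | Sum.inl u => st (i+1) = O.T (st i) u
      | Sum.inr (qi, qo) => st (i+1) = st i ∧ O.G (st i) qi = qo

/-- Eventual consistency. -/
def EC (O : UQADT U Qi Qo S) (h : Hist U Qi Qo E) : Prop :=
  h.upd.Infinite ∨ ∃ s : S,
    {e : E | ∃ qi qo, h.lab e = Sum.inr (qi, qo) ∧ O.G s qi ≠ qo}.Finite

/-- Update consistency. -/
def UC (O : UQADT U Qi Qo S) (h : Hist U Qi Qo E) : Prop :=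
  h.upd.Infinite ∨ ∃ Q' : Set E, Q' ⊆ h.qry ∧ Q'.Finite ∧
    ∃ w, IsLinz h.po Q'ᶜ w ∧ Recog O h w

/-- A reflexive relation is acyclic if its strict part has no cycles. -/
def Acyclic (r : E → E → Prop) : Prop :=
  ∀ e, ¬ Relation.TransGen (fun a b => r a b ∧ a ≠ b) e e

/-- Strong update consistency. -/
def SUC (O : UQADT U Qi Qo S) (h : Hist U Qi Qo E) : Prop :=
  ∃ vis le : E → E → Prop,
    (∀ e, vis e e) ∧ Acyclic vis ∧
    (∀ e e', h.po e e' → vis e e') ∧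
    (∀ u ∈ h.upd, {e | ¬ vis u e}.Finite) ∧
    (∀ e e' e'', vis e e' → h.po e' e'' → vis e e'') ∧
    IsLinearOrder E le ∧ (∀ e e', vis e e' → le e e') ∧
    (∀ q ∈ h.qry, ∃ w,
      IsLinz (fun a b => le a b ∧ a ≠ b) ({u | u ∈ h.upd ∧ vis u q} ∪ {q}) w ∧
      Recog O h w)

/-- Strong eventual consistency. -/
def SEC (O : UQADT U Qi Qo S) (h : Hist U Qi Qo E) : Prop :=
  ∃ vis : E → E → Prop,
    (∀ e, vis e e) ∧ Acyclic vis ∧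
    (∀ e e', h.po e e' → vis e e') ∧
    (∀ u ∈ h.upd, {e | ¬ vis u e}.Finite) ∧
    (∀ e e' e'', vis e e' → h.po e' e'' → vis e e'') ∧
    ∀ V ⊆ h.upd, ∃ s : S, ∀ e qi qo, h.lab e = Sum.inr (qi, qo) →
      {u | u ∈ h.upd ∧ vis u e} = V → O.G s qi = qo

/-! Once the finitely many updates have been enumerated, the state of the recognizing run is
frozen at some `s`; every later query in the linearization is answered from `s`. The queries
answered otherwise are therefore among the finitely many removed queries `Q'` or the finitely
many events enumerated before the last update. -/

theorem IsLinz.finite_preimage_image_some {r : E → E → Prop} {F A : Set E} {w : ℕ → Option E}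
    (hw : IsLinz r F w) (hA : A.Finite) : (w ⁻¹' (Option.some '' A)).Finite := by
  refine (hA.image _).preimage fun i hi j _ hij => ?_
  obtain ⟨a, -, ha⟩ := hi
  exact hw.1 i j a ha.symm (hij.symm.trans ha.symm)

theorem IsLinz.exists_forall_ge_ne_some {r : E → E → Prop} {F A : Set E} {w : ℕ → Option E}
    (hw : IsLinz r F w) (hA : A.Finite) : ∃ N, ∀ i ≥ N, ∀ a ∈ A, w i ≠ some a := by
  obtain ⟨M, hM⟩ := (hw.finite_preimage_image_some hA).bddAbove
  refine ⟨M + 1, fun i hi a ha hwi => ?_⟩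
  have : i ≤ M := hM ⟨a, ha, hwi.symm⟩
  omega

theorem finite_setOf_exists_lt_eq_some (w : ℕ → Option E) (N : ℕ) :
    {e | ∃ i < N, w i = some e}.Finite := by
  refine ((Set.finite_Iio N).image w).preimage (Option.some_injective E).injOn |>.subset ?_
  rintro e ⟨i, hi, hwi⟩
  exact ⟨i, hi, hwi⟩

theorem Recog.exists_state_forall_ge {O : UQADT U Qi Qo S} {h : Hist U Qi Qo E}
    {w : ℕ → Option E} (hrec : Recog O h w) {N : ℕ}
    (hN : ∀ i ≥ N, ∀ e ∈ h.upd, w i ≠ some e) :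
    ∃ s, ∀ i ≥ N, ∀ e qi qo, w i = some e → h.lab e = Sum.inr (qi, qo) → O.G s qi = qo := by
  obtain ⟨st, -, hstep⟩ := hrec
  have hconst : ∀ i ≥ N, st i = st N := by
    intro i hi
    induction i, hi using Nat.le_induction with
    | base => rfl
    | succ i hi ih =>
      rw [← ih]
      have hi' := hstep i
      cases hwi : w i with
      | none => simpa only [hwi] using hi'
      | some e =>
        cases hlab : h.lab e with
        | inl u => exact absurd hwi (hN i hi e ⟨u, hlab⟩)
        | inr q =>
          obtain ⟨qi, qo⟩ := q
          simp only [hwi, hlab] at hi'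
          exact hi'.1
  refine ⟨st N, fun i hi e qi qo hwi hlab => ?_⟩
  have hi' := hstep i
  simp only [hwi, hlab] at hi'
  exact hconst i hi ▸ hi'.2

theorem stmt1_general (O : UQADT U Qi Qo S) (h : Hist U Qi Qo E)
    (huc : UC O h) : EC O h := by
  rcases huc with hinf | ⟨Q', -, hQ'fin, w, hlin, hrec⟩
  · exact Or.inl hinf
  by_cases hinf : h.upd.Infinite
  · exact Or.inl hinf
  obtain ⟨N, hN⟩ := hlin.exists_forall_ge_ne_some (Set.not_infinite.mp hinf)
  obtain ⟨s, hs⟩ := hrec.exists_state_forall_ge hN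
  refine Or.inr ⟨s, (hQ'fin.union (finite_setOf_exists_lt_eq_some w N)).subset ?_⟩
  rintro e ⟨qi, qo, hlab, hne⟩
  by_cases heQ : e ∈ Q'
  · exact Or.inl heQ
  obtain ⟨i, hwi⟩ := hlin.2.1 e heQ
  rcases lt_or_ge i N with hi | hi
  · exact Or.inr ⟨i, hi, hwi⟩
  · exact absurd (hs i hi e qi qo hwi hlab) hne

/-- every update consistent history is eventually consistent. -/
theorem stmt1 (O : UQADT U Qi Qo S) (h : Hist U Qi Qo E)
    (hord : IsStrictOrder E h.po) (hpred : ∀ e : E, {e' | h.po e' e}.Finite)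
    (huc : UC O h) : EC O h :=
  stmt1_general O h huc
end

section
/- Every strong update consistent distributed history is strong eventually consistent. -/
variable {U Qi Qo S E : Type*}

/-!
Every update visible to a query precedes it in the total order `le`, so the query comes last in
the linearization of its visible updates `V` together with itself. Linearizations along a total
order are unique, hence the prefix before the query is the same word for all queries whose visible
set is `V`; the state reached on that prefix depends only on `V` and witnesses strong convergence.
-/

namespace IsLinz

variable {E' : Type*} {r : E → E → Prop} {F : Set E} {w w' : ℕ → Option E}

theorem map {r' : E' → E' → Prop} (hw : IsLinz r F w) {f : E → E'} (hf : f.Injective)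
    (hr : ∀ a ∈ F, ∀ b ∈ F, r' (f a) (f b) → r a b) :
    IsLinz r' (f '' F) (fun i => (w i).map f) := by
  obtain ⟨inj, surj, mem, ord, pack⟩ := hw
  refine ⟨fun i j a hi hj => ?_, ?_, fun i a hi => ?_, fun i j a b hij hi hj => ?_, ?_⟩
  · obtain ⟨a', hai, rfl⟩ := Option.map_eq_some_iff.1 hi
    exact inj i j a' hai (Option.map_injective hf (hj.trans (Option.map_some ..).symm))
  · rintro _ ⟨a, ha, rfl⟩
    obtain ⟨i, hi⟩ := surj a ha
    exact ⟨i, by simp [hi]⟩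
  · obtain ⟨a', hai, rfl⟩ := Option.map_eq_some_iff.1 hi
    exact ⟨a', mem i a' hai, rfl⟩
  · obtain ⟨a', hai, rfl⟩ := Option.map_eq_some_iff.1 hi
    obtain ⟨b', hbj, rfl⟩ := Option.map_eq_some_iff.1 hj
    exact fun hba => ord i j a' b' hij hai hbj (hr b' (mem j b' hbj) a' (mem i a' hai) hba)
  · simpa using pack

theorem exists_index_ge_of_eqOn (hw : IsLinz r F w) (hw' : IsLinz r F w') {i : ℕ}
    (hagree : ∀ k < i, w k = w' k) {b : E} (hb : w' i = some b) : ∃ k ≥ i, w k = some b := by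
  obtain ⟨k, hk⟩ := hw.2.1 b (hw'.2.2.1 i b hb)
  refine ⟨k, not_lt.1 fun hki => hki.ne (hw'.1 k i b ?_ hb), hk⟩
  rwa [← hagree k hki]

theorem eq (htot : ∀ a b, a ≠ b → r a b ∨ r b a)
    (hw : IsLinz r F w) (hw' : IsLinz r F w') : w = w' := by
  funext i
  induction i using Nat.strong_induction_on with
  | _ i ih =>
    have ih' : ∀ k < i, w' k = w k := fun k hk => (ih k hk).symm
    cases hwi : w i with
    | none =>
      cases hwi' : w' i with
      | none => rfl
      | some b =>
        obtain ⟨k, hik, hk⟩ := hw.exists_index_ge_of_eqOn hw' ih hwi'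
        exact absurd hwi (hw.2.2.2.2 i k hik (by simp [hk]))
    | some a =>
      cases hwi' : w' i with
      | none =>
        obtain ⟨k, hik, hk⟩ := hw'.exists_index_ge_of_eqOn hw ih' hwi
        exact absurd hwi' (hw'.2.2.2.2 i k hik (by simp [hk]))
      | some b =>
        by_contra hab
        replace hab : a ≠ b := fun h => hab (congrArg some h)
        obtain ⟨k, hik, hk⟩ := hw'.exists_index_ge_of_eqOn hw ih' hwi
        obtain ⟨l, hil, hl⟩ := hw.exists_index_ge_of_eqOn hw' ih hwi'
        have hik : i < k := hik.lt_of_ne fun h => hab (by simpa [h, hk] using hwi')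
        have hil : i < l := hil.lt_of_ne fun h => hab (Eq.symm (by simpa [h, hl] using hwi))
        rcases htot a b hab with hr | hr
        · exact hw'.2.2.2.1 i k b a hik hwi' hk hr
        · exact hw.2.2.2.1 i l a b hil hwi hl hr

theorem eqOn_of_forall_lt (htot : ∀ a b, a ≠ b → r a b ∨ r b a)
    (hasymm : ∀ a b, r a b → ¬ r b a) {e e' : E}
    (hFe : ∀ a ∈ F, r a e) (hFe' : ∀ a ∈ F, r a e')
    (hw : IsLinz r (F ∪ {e}) w) (hw' : IsLinz r (F ∪ {e'}) w') {m : ℕ} (hm : w m = some e) :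
    w' m = some e' ∧ ∀ i < m, w' i = w i := by
  classical
  have hirrefl : ∀ a, ¬ r a a := fun a ha => hasymm a a ha ha
  have heF : e ∉ F := fun he => hirrefl e (hFe e he)
  have he'F : e' ∉ F := fun he => hirrefl e' (hFe' e' he)
  have hfix : ∀ a ∈ F, Equiv.swap e e' a = a := fun a ha =>
    Equiv.swap_apply_of_ne_of_ne (ne_of_mem_of_not_mem ha heF) (ne_of_mem_of_not_mem ha he'F)
  -- Swapping `e` and `e'` turns `w` into a linearization of `F ∪ {e'}`, which must be `w'`.
  have hswap : IsLinz r (F ∪ {e'}) (fun i => (w i).map (Equiv.swap e e')) := by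
    have himage : Equiv.swap e e' '' (F ∪ {e}) = F ∪ {e'} := by
      rw [Set.image_union, Set.image_singleton, Equiv.swap_apply_left,
        Set.EqOn.image_eq_self hfix]
    refine himage ▸ hw.map (Equiv.injective _) ?_
    rintro a (ha | rfl) b (hb | rfl) hab
    · rwa [hfix a ha, hfix b hb] at hab
    · exact hFe a ha
    · rw [Equiv.swap_apply_left, hfix b hb] at hab
      exact absurd hab (hasymm _ _ (hFe' b hb))
    · simp only [Equiv.swap_apply_left] at hab
      exact absurd hab (hirrefl e')
  obtain rfl := hswap.eq htot hw'
  refine ⟨by simp [hm], fun i hi => ?_⟩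
  cases hwi : w i with
  | none => simp [hwi]
  | some a =>
    rcases hw.2.2.1 i a hwi with ha | rfl
    · simp [hwi, hfix a ha]
    · exact absurd (hw.1 i m a hwi hm) hi.ne

end IsLinz

/-- `Recog O h w` is `∃ st, IsRun O h w st`. -/
def IsRun (O : UQADT U Qi Qo S) (h : Hist U Qi Qo E) (w : ℕ → Option E) (st : ℕ → S) : Prop :=
  st 0 = O.s0 ∧ ∀ i,
    match w i with
    | none => st (i+1) = st i
    | some e =>
      match h.lab e with
      | Sum.inl u => st (i+1) = O.T (st i) u
      | Sum.inr (qi, qo) => st (i+1) = st i ∧ O.G (st i) qi = qo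

namespace IsRun

variable {O : UQADT U Qi Qo S} {h : Hist U Qi Qo E} {w w' : ℕ → Option E} {st st' : ℕ → S}

theorem eq_of_eqOn (hrun : IsRun O h w st) (hrun' : IsRun O h w' st') {m : ℕ}
    (hagree : ∀ i < m, w' i = w i) : st' m = st m := by
  induction m with
  | zero => exact hrun'.1.trans hrun.1.symm
  | succ n ih =>
    have ihn := ih fun i hi => hagree i (hi.trans n.lt_succ_self)
    have step := hrun.2 n
    have step' := hrun'.2 n
    rw [hagree n n.lt_succ_self] at step'
    rcases hwn : w n with _ | a
    · simp only [hwn] at step step'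
      rw [step, step', ihn]
    · simp only [hwn] at step step'
      rcases hla : h.lab a with u | ⟨qi, qo⟩ <;> simp only [hla] at step step'
      · rw [step, step', ihn]
      · rw [step.1, step'.1, ihn]

theorem output (hrun : IsRun O h w st) {m : ℕ} {q : E} {qi : Qi} {qo : Qo}
    (hm : w m = some q) (hq : h.lab q = Sum.inr (qi, qo)) : O.G (st m) qi = qo := by
  have step := hrun.2 m
  simp only [hm, hq] at step
  exact step.2

end IsRun

theorem stmt3_general (O : UQADT U Qi Qo S) (h : Hist U Qi Qo E)
    (hsuc : SUC O h) : SEC O h := by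
  obtain ⟨vis, le, hrefl, hacyc, hpo, hfin, hgrow, hlin, hvisle, hrec⟩ := hsuc
  refine ⟨vis, hrefl, hacyc, hpo, hfin, hgrow, fun V _ => ?_⟩
  have htot : ∀ a b, a ≠ b → (le a b ∧ a ≠ b) ∨ (le b a ∧ b ≠ a) := fun a b hab =>
    (hlin.total a b).imp (⟨·, hab⟩) (⟨·, hab.symm⟩)
  have hasymm : ∀ a b, le a b ∧ a ≠ b → ¬ (le b a ∧ b ≠ a) := fun a b hab hba =>
    hab.2 (hlin.antisymm a b hab.1 hba.1)
  have hbelow : ∀ e qi qo, h.lab e = Sum.inr (qi, qo) →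
      ∀ a ∈ {u | u ∈ h.upd ∧ vis u e}, le a e ∧ a ≠ e := by
    rintro e qi qo he a ⟨⟨u, hu⟩, hae⟩
    exact ⟨hvisle a e hae, by rintro rfl; simp [he] at hu⟩
  by_cases hV : ∃ e0 qi0 qo0, h.lab e0 = Sum.inr (qi0, qo0) ∧ {u | u ∈ h.upd ∧ vis u e0} = V
  swap
  · exact ⟨O.s0, fun e qi qo he hVe => (hV ⟨e, qi, qo, he, hVe⟩).elim⟩
  obtain ⟨e0, qi0, qo0, he0, rfl⟩ := hV
  obtain ⟨w0, hw0, st0, hrun0⟩ := hrec e0 ⟨_, he0⟩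
  obtain ⟨m0, hm0⟩ := hw0.2.1 e0 (Or.inr rfl)
  refine ⟨st0 m0, fun e qi qo he hVe => ?_⟩
  obtain ⟨w, hw, st, hrun⟩ := hrec e ⟨_, he⟩
  have hbelow_e := hbelow e qi qo he
  rw [hVe] at hw hbelow_e
  obtain ⟨hm, hagree⟩ :=
    IsLinz.eqOn_of_forall_lt htot hasymm (hbelow e0 qi0 qo0 he0) hbelow_e hw0 hw hm0
  rw [← IsRun.eq_of_eqOn hrun0 hrun hagree]
  exact IsRun.output hrun hm he

/-- every strong update consistent history is strong eventually
consistent. -/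
theorem stmt3 (O : UQADT U Qi Qo S) (h : Hist U Qi Qo E)
    (hord : IsStrictOrder E h.po) (hpred : ∀ e : E, {e' | h.po e' e}.Finite)
    (hsuc : SUC O h) : SEC O h :=
  stmt3_general O h hsuc
end
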